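/- Let r, m be positive integers, let A be an r × r integer matrix with det(A) ≠ 0 and let B be an m × m integer matrix with det(B) ≠ 0, regarded as (injective) ℤ-linear maps A : ℤ^r → ℤ^r and B : ℤ^m → ℤ^m. Suppose α₁ : ℤ^r → ℤ^m and α₂ : ℤ^r → ℤ^m are injective group homomorphisms satisfying B ∘ α₁ = α₂ ∘ A, that the cokernels coker(α₁) and coker(α₂) are free abelian groups of the same finite rank, and that the homomorphism coker(α₁) → coker(α₂) induced by B is surjective. Then |det(A)| = |det(B)|. -/

import Mathlib

/-!
Since `coker α₁` and `coker α₂` are both `ℤ^k`, the surjection between them induced by `B` is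
also injective (surjective endomorphisms of finitely generated `ℤ`-modules are injective).
The snake lemma for the map of short exact sequences `0 → ℤ^r → ℤ^m → coker αᵢ → 0` given by
`(A, B)` then shows that `α₂` induces an isomorphism `coker A ≃ coker B`, and the order of the
cokernel of an integer matrix with nonzero determinant is the absolute value of its determinant.
-/

open Function Matrix QuotientAddGroup

theorem AddMonoidHom.range_le_comap_range_of_comp_eq {X Y Y' Z : Type*} [AddGroup X] [AddGroup Y]
    [AddGroup Y'] [AddGroup Z] {f : X →+ Y} {g : Y →+ Z} {f' : X →+ Y'} {g' : Y' →+ Z}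
    (comm : g.comp f = g'.comp f') : f.range ≤ g'.range.comap g := by
  rintro _ ⟨x, rfl⟩
  exact ⟨f' x, (DFunLike.congr_fun comm x).symm⟩

theorem AddMonoidHom.injective_of_surjective_of_addEquiv {M N P : Type*} [AddCommGroup M]
    [AddCommGroup N] [AddCommGroup P] [Module.Finite ℤ P] (e₁ : M ≃+ P) (e₂ : N ≃+ P)
    (φ : M →+ N) (hφ : Surjective φ) : Injective φ := by
  let ψ : P →+ P := (e₂.toAddMonoidHom.comp φ).comp e₁.symm.toAddMonoidHom
  have hψ : Injective ψ := OrzechProperty.injective_of_surjective_endomorphism ψ.toIntLinearMap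
    (e₂.surjective.comp (hφ.comp e₁.symm.surjective))
  intro x y hxy
  simpa using hψ (show ψ (e₁ x) = ψ (e₁ y) by simp [ψ, hxy])

section CommSquare

variable {X X' Y Y' : Type*} [AddCommGroup X] [AddCommGroup X'] [AddCommGroup Y]
  [AddCommGroup Y'] {α₁ : X →+ Y} {α₂ : X' →+ Y'} {f : X →+ X'} {g : Y →+ Y'}

open AddMonoidHom

theorem QuotientAddGroup.map_range_injective_of_map_range_injective
    (comm : g.comp α₁ = α₂.comp f) (hα₂ : Injective α₂)
    (hφ : Injective (map α₁.range α₂.range g (range_le_comap_range_of_comp_eq comm))) :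
    Injective (map f.range g.range α₂ (range_le_comap_range_of_comp_eq comm.symm)) := by
  refine (injective_iff_map_eq_zero _).2 fun q hq ↦ ?_
  obtain ⟨x, rfl⟩ := mk_surjective q
  obtain ⟨y, hy⟩ := (eq_zero_iff _).1 hq
  -- the connecting map sends `[x]` to `[y] ∈ ker φ`, which vanishes
  have hy₀ : (y : Y ⧸ α₁.range) = 0 :=
    hφ <| by rw [map_zero, map_mk, eq_zero_iff]; exact ⟨x, hy.symm⟩
  obtain ⟨z, rfl⟩ := (eq_zero_iff _).1 hy₀
  refine (eq_zero_iff _).2 ⟨z, hα₂ ?_⟩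
  rw [← hy]
  exact (DFunLike.congr_fun comm z).symm

theorem QuotientAddGroup.map_range_surjective_of_map_range_surjective
    (comm : g.comp α₁ = α₂.comp f)
    (hφ : Surjective (map α₁.range α₂.range g (range_le_comap_range_of_comp_eq comm))) :
    Surjective (map f.range g.range α₂ (range_le_comap_range_of_comp_eq comm.symm)) := by
  intro q
  obtain ⟨y', rfl⟩ := mk_surjective q
  obtain ⟨w, hw⟩ := hφ (y' : Y' ⧸ α₂.range)
  obtain ⟨y, rfl⟩ := mk_surjective w
  obtain ⟨x, hx⟩ := (QuotientAddGroup.eq).1 hw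
  refine ⟨(x : X' ⧸ f.range), (QuotientAddGroup.eq).2 ⟨y, ?_⟩⟩
  simp [hx]

end CommSquare

theorem Matrix.card_quotient_range_mulVecLin {ι : Type*} [Fintype ι] [DecidableEq ι]
    (M : Matrix ι ι ℤ) (hM : M.det ≠ 0) :
    Nat.card ((ι → ℤ) ⧸ M.mulVecLin.toAddMonoidHom.range) = M.det.natAbs := by
  have hinj : Injective M.mulVecLin := isLeftRegular_iff_mulVec_injective.1
    (isRegular_of_isLeftRegular_det (IsLeftCancelMulZero.mul_left_cancel_of_ne_zero hM)).left
  rw [← LinearMap.det_toLin' M, toLin'_apply']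
  exact (Submodule.natAbs_det_equiv _ (LinearEquiv.ofInjective _ hinj)).symm

/-- Let `A` be an `r × r` integer matrix and `B` an `m × m` integer
matrix, both with nonzero determinant, regarded as (injective) `ℤ`-linear maps
`ℤ^r → ℤ^r` and `ℤ^m → ℤ^m`.  Suppose `α₁, α₂ : ℤ^r → ℤ^m` are injective group
homomorphisms with `B ∘ α₁ = α₂ ∘ A`, the cokernels of `α₁` and `α₂` are free abelian
groups of the same finite rank, and the homomorphism `coker α₁ → coker α₂` induced by
`B` is surjective.  Then `|det A| = |det B|`. -/
theorem abs_det_eq_abs_det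
    {r m : ℕ}
    (A : Matrix (Fin r) (Fin r) ℤ) (B : Matrix (Fin m) (Fin m) ℤ)
    (hA : A.det ≠ 0) (hB : B.det ≠ 0)
    (α₁ α₂ : (Fin r → ℤ) →+ (Fin m → ℤ))
    (hα₂ : Function.Injective α₂)
    (comm : (B.mulVecLin.toAddMonoidHom).comp α₁ = α₂.comp A.mulVecLin.toAddMonoidHom)
    (hfree : ∃ k : ℕ,
      Nonempty (((Fin m → ℤ) ⧸ α₁.range) ≃+ (Fin k → ℤ)) ∧
      Nonempty (((Fin m → ℤ) ⧸ α₂.range) ≃+ (Fin k → ℤ)))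
    (hsurj : Function.Surjective
      (QuotientAddGroup.map α₁.range α₂.range B.mulVecLin.toAddMonoidHom
        (by rintro x ⟨n, rfl⟩
            exact ⟨A.mulVecLin n, (DFunLike.congr_fun comm n).symm⟩))) :
    |A.det| = |B.det| := by
  obtain ⟨k, ⟨e₁⟩, ⟨e₂⟩⟩ := hfree
  have hinj := AddMonoidHom.injective_of_surjective_of_addEquiv e₁ e₂ _ hsurj
  have hcard := Nat.card_congr <| Equiv.ofBijective _
    ⟨map_range_injective_of_map_range_injective comm hα₂ hinj,
      map_range_surjective_of_map_range_surjective comm hsurj⟩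
  rw [card_quotient_range_mulVecLin A hA, card_quotient_range_mulVecLin B hB] at hcard
  rw [Int.abs_eq_natAbs, Int.abs_eq_natAbs, hcard]
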